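/- Let Φ be a root system of type ADE (simply-laced) of rank d ≥ 2 in ℝ^d, let L ⊆ ℂ^d be a 2-dimensional ℂ-linear subspace with L ⊄ ker θ_ℂ for every θ ∈ Φ, and let Φ = Φ_1 ⊔ ⋯ ⊔ Φ_s be the L-induced decomposition. Then 2d − 1 ≤ Σ_{k=1}^s rank Φ_k ≤ (1/2)·#Φ, where rank Φ_k := dim_ℝ span_ℝ Φ_k. -/

import Mathlib

noncomputable section

/-- The standard inner product on `ℝ^d`. -/
def dotR {d : ℕ} (x y : Fin d → ℝ) : ℝ := ∑ i, x i * y i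

/-- `Φ` is a root system in `ℝ^d`: a finite set of nonzero vectors spanning `ℝ^d`,
closed under the reflections `s_α`, with integral Cartan numbers. -/
def IsRootSystem {d : ℕ} (Φ : Finset (Fin d → ℝ)) : Prop :=
  (∀ α ∈ Φ, α ≠ 0) ∧
  Submodule.span ℝ (Φ : Set (Fin d → ℝ)) = ⊤ ∧
  (∀ α ∈ Φ, ∀ β ∈ Φ, β - (2 * dotR β α / dotR α α) • α ∈ Φ) ∧
  (∀ α ∈ Φ, ∀ β ∈ Φ, ∃ n : ℤ, 2 * dotR β α / dotR α α = (n : ℝ))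

/-- `Φ` is reduced: the only multiples of a root `α` in `Φ` are `±α`. -/
def IsReducedRS {d : ℕ} (Φ : Finset (Fin d → ℝ)) : Prop :=
  ∀ α ∈ Φ, ∀ t : ℝ, t • α ∈ Φ → t = 1 ∨ t = -1

/-- `Φ` is irreducible: it is not the disjoint union of two nonempty mutually
orthogonal subsets. -/
def IsIrreducibleRS {d : ℕ} (Φ : Finset (Fin d → ℝ)) : Prop :=
  ∀ A B : Set (Fin d → ℝ), (Φ : Set (Fin d → ℝ)) = A ∪ B → Disjoint A B →
    (∀ a ∈ A, ∀ b ∈ B, dotR a b = 0) → A = ∅ ∨ B = ∅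

/-- The complexification `θ_ℂ : ℂ^d → ℂ` of the linear functional `z ↦ Σ θᵢ zᵢ`. -/
def thetaC {d : ℕ} (θ : Fin d → ℝ) (z : Fin d → ℂ) : ℂ := ∑ i, (θ i : ℂ) * z i

/-- The kernel of `θ_ℂ`, as a complex subspace of `ℂ^d`. -/
def kerC {d : ℕ} (θ : Fin d → ℝ) : Submodule ℂ (Fin d → ℂ) where
  carrier := {z | thetaC θ z = 0}
  add_mem' := by
    intro a b ha hb
    simp only [Set.mem_setOf_eq, thetaC] at *
    simp [Pi.add_apply, mul_add, Finset.sum_add_distrib, ha, hb]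
  zero_mem' := by simp [thetaC]
  smul_mem' := by
    intro c z hz
    simp only [Set.mem_setOf_eq, thetaC] at *
    have h : ∑ i, (θ i : ℂ) * (c • z) i = c * ∑ i, (θ i : ℂ) * z i := by
      rw [Finset.mul_sum]
      exact Finset.sum_congr rfl (fun i _ => by simp [Pi.smul_apply, smul_eq_mul]; ring)
    rw [h, hz, mul_zero]

/-!
Each fiber `Φ_k` is closed under `θ ↦ -θ`, so half of it already spans it: this gives the upper
bound.

The fiber of `θ` is the kernel of `θ_ℂ` restricted to the plane `L`, so if two of `θ`, `η`,
`θ - n η` lie in the same fiber, so does the third. Hence for non-orthogonal roots `τ`, `β` in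
different fibers, the reflection `s_β τ = τ - n β` (`n ≠ 0`) lies in a third fiber.

For the lower bound, grow a set `S` of roots in which every root has such a non-orthogonal partner
in a different fiber. Irreducibility gives a root `τ ∉ span S` non-orthogonal to some `β ∈ S`; if
`τ` and `β` share a fiber, pass to the partner `β'` of `β`, replacing `τ` by `s_β τ` when `τ ⊥ β'`.
Adding `τ` to `S` raises `rank S` by one, while the roots `τ` and `s_β τ`, both outside `span S`
and in different fibers, raise the sum of the ranks of the fibers inside `span S` by at least two.
Starting from a cross pair, whose span already meets three fibers, and stopping at
`span S = ℝ^d` gives `Σ rank Φ_k ≥ 2d - 1`.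
-/

open Module Submodule

section FiberRanks

variable {K V ι : Type*} [DivisionRing K] [AddCommGroup V] [Module K V]

theorem two_mul_finrank_span_le_card [IsAddTorsionFree V] (S : Finset V) (h0 : (0 : V) ∉ S)
    (hneg : ∀ x ∈ S, -x ∈ S) : 2 * finrank K (span K (S : Set V)) ≤ S.card := by
  classical
  induction S using Finset.strongInduction with
  | H S ih =>
  obtain rfl | ⟨x, hx⟩ := S.eq_empty_or_nonempty
  · simp
  have hx0 : x ≠ 0 := ne_of_mem_of_not_mem hx h0
  have hnegx : -x ∈ S.erase x := Finset.mem_erase.2 ⟨neg_ne_self.2 hx0, hneg x hx⟩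
  set T := (S.erase x).erase (-x)
  have hST : S = insert x (insert (-x) T) := by
    rw [Finset.insert_erase hnegx, Finset.insert_erase hx]
  have hT : 2 * finrank K (span K (T : Set V)) ≤ T.card := by
    refine ih T ((Finset.erase_subset _ _).trans_ssubset (Finset.erase_ssubset hx))
      (fun h => h0 (Finset.mem_of_mem_erase (Finset.mem_of_mem_erase h))) fun y hy => ?_
    simp only [T, Finset.mem_erase, ne_eq] at hy ⊢
    exact ⟨fun h => hy.2.1 (neg_inj.1 h), fun h => hy.1 (neg_eq_iff_eq_neg.1 h), hneg y hy.2.2⟩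
  have hspan : finrank K (span K (S : Set V)) ≤ finrank K (span K (T : Set V)) + 1 := by
    rw [hST, Finset.coe_insert, Finset.coe_insert, Set.insert_comm,
      span_insert_eq_span (neg_mem (subset_span (Set.mem_insert x _))), span_insert]
    refine (finrank_add_le_finrank_add_finrank _ _).trans ?_
    rw [finrank_span_singleton hx0, add_comm]
  have hcard : T.card + 1 + 1 = S.card := by
    rw [Finset.card_erase_add_one hnegx, Finset.card_erase_add_one hx]
  omega

theorem two_mul_sum_finrank_span_fiber_le_card [IsAddTorsionFree V] [DecidableEq ι]
    (Φ : Finset V) (c : V → ι) (h0 : (0 : V) ∉ Φ) (hneg : ∀ θ ∈ Φ, -θ ∈ Φ)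
    (hc : ∀ θ ∈ Φ, c (-θ) = c θ) :
    2 * ∑ l ∈ Φ.image c, finrank K (span K {θ | θ ∈ Φ ∧ c θ = l}) ≤ Φ.card := by
  rw [Finset.card_eq_sum_card_fiberwise fun θ hθ => Finset.mem_image_of_mem c hθ, Finset.mul_sum]
  refine Finset.sum_le_sum fun l _ => ?_
  have hfiber : {θ | θ ∈ Φ ∧ c θ = l} = ((Φ.filter (c · = l) : Finset V) : Set V) := by
    ext; simp
  rw [hfiber]
  refine two_mul_finrank_span_le_card _ (fun h => h0 (Finset.mem_filter.1 h).1) fun θ hθ => ?_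
  rw [Finset.mem_filter] at hθ ⊢
  exact ⟨hneg θ hθ.1, (hc θ hθ.1).trans hθ.2⟩

variable (K) in
def fiberRankSum [DecidableEq ι] (Φ : Finset V) (c : V → ι) (X : Submodule K V) : ℕ :=
  ∑ l ∈ Φ.image c, finrank K (span K {θ | θ ∈ Φ ∧ c θ = l ∧ θ ∈ X})

theorem fiberRankSum_top [DecidableEq ι] (Φ : Finset V) (c : V → ι) :
    fiberRankSum K Φ c ⊤ = ∑ l ∈ Φ.image c, finrank K (span K {θ | θ ∈ Φ ∧ c θ = l}) := by
  refine Finset.sum_congr rfl fun l _ => ?_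
  have hset : {θ | θ ∈ Φ ∧ c θ = l ∧ θ ∈ (⊤ : Submodule K V)} = {θ | θ ∈ Φ ∧ c θ = l} := by
    simp
  rw [hset]

theorem fiberRankSum_add_card_le [FiniteDimensional K V] [DecidableEq ι] {Φ : Finset V}
    {c : V → ι} {X Y : Submodule K V} (hXY : X ≤ Y) (F : Finset ι)
    (hF : ∀ l ∈ F, ∃ θ ∈ Φ, c θ = l ∧ θ ∈ Y ∧ θ ∉ X) :
    fiberRankSum K Φ c X + F.card ≤ fiberRankSum K Φ c Y := by
  have hFΦ : F ⊆ Φ.image c := fun l hl => by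
    obtain ⟨θ, hθ, rfl, -⟩ := hF l hl
    exact Finset.mem_image_of_mem c hθ
  have hterm : ∀ l, finrank K (span K {θ | θ ∈ Φ ∧ c θ = l ∧ θ ∈ X}) + (if l ∈ F then 1 else 0)
      ≤ finrank K (span K {θ | θ ∈ Φ ∧ c θ = l ∧ θ ∈ Y}) := by
    intro l
    have hmono : span K {θ | θ ∈ Φ ∧ c θ = l ∧ θ ∈ X} ≤ span K {θ | θ ∈ Φ ∧ c θ = l ∧ θ ∈ Y} :=
      span_mono fun θ ⟨hθ, hl, hX⟩ => ⟨hθ, hl, hXY hX⟩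
    split_ifs with hl
    · obtain ⟨θ, hθ, rfl, hY, hX⟩ := hF l hl
      refine finrank_lt_finrank_of_lt (lt_of_le_of_ne hmono fun h => hX ?_)
      have hθmem : θ ∈ span K {η | η ∈ Φ ∧ c η = c θ ∧ η ∈ X} := h ▸ subset_span ⟨hθ, rfl, hY⟩
      exact span_le.2 (fun η hη => hη.2.2) hθmem
    · exact finrank_mono hmono
  calc fiberRankSum K Φ c X + F.card
      = ∑ l ∈ Φ.image c, (finrank K (span K {θ | θ ∈ Φ ∧ c θ = l ∧ θ ∈ X})
          + if l ∈ F then 1 else 0) := by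
        rw [Finset.sum_add_distrib, Finset.sum_boole, Finset.filter_mem_eq_inter,
          Finset.inter_eq_right.2 hFΦ, Nat.cast_id, fiberRankSum]
    _ ≤ fiberRankSum K Φ c Y := Finset.sum_le_sum fun l _ => hterm l

end FiberRanks

variable {d : ℕ}

theorem dotR_eq_dotProduct (x y : Fin d → ℝ) : dotR x y = x ⬝ᵥ y := rfl

theorem dotR_comm (x y : Fin d → ℝ) : dotR x y = dotR y x := dotProduct_comm x y

theorem dotR_sub_smul (x y z : Fin d → ℝ) (n : ℝ) :
    dotR (x - n • y) z = dotR x z - n * dotR y z := by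
  simp only [dotR_eq_dotProduct, sub_dotProduct, smul_dotProduct, smul_eq_mul]

theorem dotR_eq_linearCombination (x y : Fin d → ℝ) :
    dotR x y = Fintype.linearCombination ℝ y x := by
  simp [dotR, Fintype.linearCombination_apply]

theorem exists_mem_dotR_ne_zero_of_mem_span {S : Set (Fin d → ℝ)} {a b : Fin d → ℝ}
    (ha : a ∈ span ℝ S) (hab : dotR a b ≠ 0) : ∃ s ∈ S, dotR s b ≠ 0 := by
  by_contra! h
  have hker : span ℝ S ≤ LinearMap.ker (Fintype.linearCombination ℝ b) :=
    span_le.2 fun s hs => by simpa [dotR_eq_linearCombination] using h s hs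
  exact hab (by simpa [dotR_eq_linearCombination] using hker ha)

theorem thetaC_eq_linearCombination (θ : Fin d → ℝ) (z : Fin d → ℂ) :
    thetaC θ z = Fintype.linearCombination ℝ z θ := by
  simp [thetaC, Fintype.linearCombination_apply, Complex.real_smul]

theorem thetaC_sub_smul (θ η : Fin d → ℝ) (n : ℝ) (z : Fin d → ℂ) :
    thetaC (θ - n • η) z = thetaC θ z - n * thetaC η z := by
  simp [thetaC_eq_linearCombination, Complex.real_smul]

theorem thetaC_neg (θ : Fin d → ℝ) (z : Fin d → ℂ) : thetaC (-θ) z = -thetaC θ z := by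
  simp [thetaC_eq_linearCombination]

theorem eq_zero_of_forall_thetaC_eq_zero {Φ : Set (Fin d → ℝ)} (hΦ : span ℝ Φ = ⊤)
    {z : Fin d → ℂ} (h : ∀ θ ∈ Φ, thetaC θ z = 0) : z = 0 := by
  classical
  have hker : span ℝ Φ ≤ LinearMap.ker (Fintype.linearCombination ℝ z) :=
    span_le.2 fun θ hθ => by simpa [thetaC_eq_linearCombination] using h θ hθ
  rw [hΦ] at hker
  funext i
  simpa using hker (mem_top (x := Pi.single i 1))

theorem mem_kerC {θ : Fin d → ℝ} {z : Fin d → ℂ} : z ∈ kerC θ ↔ thetaC θ z = 0 := Iff.rfl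

theorem kerC_neg (θ : Fin d → ℝ) : kerC (-θ) = kerC θ := by
  ext z
  simp [mem_kerC, thetaC_neg]

theorem kerC_eq_ker (θ : Fin d → ℝ) :
    kerC θ = LinearMap.ker (Fintype.linearCombination ℂ fun i => (θ i : ℂ)) := by
  ext z
  simp [mem_kerC, thetaC, Fintype.linearCombination_apply, mul_comm]

section Fibers

variable {L : Submodule ℂ (Fin d → ℂ)} {θ η : Fin d → ℝ}

theorem finrank_kerC_inf_add_one (h : ¬ L ≤ kerC θ) :
    finrank ℂ ↥(kerC θ ⊓ L) + 1 = finrank ℂ L := by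
  set f : Dual ℂ L := (Fintype.linearCombination ℂ fun i => (θ i : ℂ)).domRestrict L
  have hf : f ≠ 0 := fun hf => h fun z hz => by
    simpa [f, kerC_eq_ker] using LinearMap.congr_fun hf ⟨z, hz⟩
  have hker : finrank ℂ (LinearMap.ker f) = finrank ℂ ↥(kerC θ ⊓ L) := by
    rw [← finrank_map_subtype_eq, LinearMap.ker_domRestrict, map_comap_subtype, ← kerC_eq_ker,
      inf_comm]
  rw [← hker, Dual.finrank_ker_add_one_of_ne_zero hf]

theorem kerC_inf_eq_of_le (hθ : ¬ L ≤ kerC θ) (hη : ¬ L ≤ kerC η) (h : kerC θ ⊓ L ≤ kerC η) :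
    kerC θ ⊓ L = kerC η ⊓ L :=
  eq_of_le_of_finrank_le (le_inf h inf_le_right) <| by
    have := finrank_kerC_inf_add_one hθ
    have := finrank_kerC_inf_add_one hη
    omega

theorem kerC_sub_smul_inf_eq {n : ℝ} (hθ : ¬ L ≤ kerC θ) (hζ : ¬ L ≤ kerC (θ - n • η))
    (h : kerC θ ⊓ L = kerC η ⊓ L) : kerC (θ - n • η) ⊓ L = kerC θ ⊓ L := by
  refine (kerC_inf_eq_of_le hθ hζ fun z hz => ?_).symm
  have hη : z ∈ kerC η := (h ▸ hz).1
  rw [mem_kerC, thetaC_sub_smul, mem_kerC.1 hz.1, mem_kerC.1 hη, mul_zero, sub_zero]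

theorem kerC_sub_smul_inf_ne_left {n : ℝ} (hn : n ≠ 0) (hθ : ¬ L ≤ kerC θ)
    (hη : ¬ L ≤ kerC η) (h : kerC θ ⊓ L ≠ kerC η ⊓ L) :
    kerC (θ - n • η) ⊓ L ≠ kerC θ ⊓ L := by
  refine fun hζ => h (kerC_inf_eq_of_le hθ hη fun z hz => ?_)
  have hz' := mem_kerC.1 (hζ ▸ hz).1
  rw [thetaC_sub_smul, mem_kerC.1 hz.1, zero_sub, neg_eq_zero, mul_eq_zero] at hz'
  exact hz'.resolve_left (by exact_mod_cast hn)

theorem kerC_sub_smul_inf_ne_right {n : ℝ} (hθ : ¬ L ≤ kerC θ) (hη : ¬ L ≤ kerC η)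
    (h : kerC θ ⊓ L ≠ kerC η ⊓ L) : kerC (θ - n • η) ⊓ L ≠ kerC η ⊓ L := by
  refine fun hζ => h (kerC_inf_eq_of_le hη hθ fun z hz => ?_).symm
  have hz' := mem_kerC.1 (hζ ▸ hz).1
  rwa [thetaC_sub_smul, mem_kerC.1 hz.1, mul_zero, sub_zero] at hz'

theorem exists_kerC_inf_ne {Φ : Set (Fin d → ℝ)} (hΦ : span ℝ Φ = ⊤)
    (hL : 2 ≤ finrank ℂ L) (hθ : ¬ L ≤ kerC θ) : ∃ η ∈ Φ, kerC η ⊓ L ≠ kerC θ ⊓ L := by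
  have hne : kerC θ ⊓ L ≠ ⊥ := fun h => by
    have := finrank_kerC_inf_add_one hθ
    rw [h, finrank_bot] at this
    omega
  obtain ⟨z, hz, hz0⟩ := exists_mem_ne_zero_of_ne_bot hne
  by_contra! hall
  exact hz0 (eq_zero_of_forall_thetaC_eq_zero hΦ fun η hη => ((hall η hη).symm ▸ hz).1)

end Fibers

namespace IsRootSystem

variable {Φ : Finset (Fin d → ℝ)}

theorem ne_zero (hΦ : IsRootSystem Φ) {θ : Fin d → ℝ} (hθ : θ ∈ Φ) : θ ≠ 0 := hΦ.1 θ hθ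

theorem neg_mem (hΦ : IsRootSystem Φ) {θ : Fin d → ℝ} (hθ : θ ∈ Φ) : -θ ∈ Φ := by
  have hθθ : dotR θ θ ≠ 0 := by simpa [dotR_eq_dotProduct] using hΦ.ne_zero hθ
  have h := hΦ.2.2.1 θ hθ θ hθ
  rwa [mul_div_cancel_right₀ 2 hθθ, two_smul, sub_add_cancel_left] at h

theorem exists_sub_smul_mem (hΦ : IsRootSystem Φ) {τ β : Fin d → ℝ} (hβ : β ∈ Φ) (hτ : τ ∈ Φ)
    (h : dotR τ β ≠ 0) :
    ∃ n : ℝ, n ≠ 0 ∧ τ - n • β ∈ Φ := by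
  have hββ : dotR β β ≠ 0 := by simpa [dotR_eq_dotProduct] using hΦ.ne_zero hβ
  exact ⟨2 * dotR τ β / dotR β β, div_ne_zero (mul_ne_zero two_ne_zero h) hββ,
    hΦ.2.2.1 β hβ τ hτ⟩

theorem nonempty (hΦ : IsRootSystem Φ) (hd : 0 < d) : Φ.Nonempty := by
  have : Nonempty (Fin d) := ⟨⟨0, hd⟩⟩
  refine Finset.nonempty_iff_ne_empty.2 fun h => ?_
  have := hΦ.2.1
  simp [h] at this

end IsRootSystem

theorem IsIrreducibleRS.exists_dotR_ne_zero {Φ : Finset (Fin d → ℝ)} (hΦ : IsIrreducibleRS Φ)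
    (p : (Fin d → ℝ) → Prop) {α β : Fin d → ℝ} (hα : α ∈ Φ) (hpα : p α) (hβ : β ∈ Φ)
    (hpβ : ¬ p β) : ∃ a ∈ Φ, p a ∧ ∃ b ∈ Φ, ¬ p b ∧ dotR a b ≠ 0 := by
  by_contra! h
  obtain h | h := hΦ {a | a ∈ Φ ∧ p a} {b | b ∈ Φ ∧ ¬ p b} (by ext; simp; tauto)
    (Set.disjoint_left.2 fun _ ha hb => hb.2 ha.2) fun a ha b hb => h a ha.1 ha.2 b hb.1 hb.2
  · exact h.subset ⟨hα, hpα⟩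
  · exact h.subset ⟨hβ, hpβ⟩

section LowerBound

open Classical

variable {Φ : Finset (Fin d → ℝ)} {L : Submodule ℂ (Fin d → ℂ)}

def IsCrossPair (L : Submodule ℂ (Fin d → ℂ)) (θ η : Fin d → ℝ) : Prop :=
  dotR θ η ≠ 0 ∧ kerC θ ⊓ L ≠ kerC η ⊓ L

theorem IsCrossPair.symm {θ η : Fin d → ℝ} (h : IsCrossPair L θ η) : IsCrossPair L η θ :=
  ⟨dotR_comm θ η ▸ h.1, h.2.symm⟩

def IsAdmissible (L : Submodule ℂ (Fin d → ℂ)) (Φ S : Finset (Fin d → ℝ)) : Prop :=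
  S ⊆ Φ ∧ S.Nonempty ∧ (∀ β ∈ S, ∃ β' ∈ S, IsCrossPair L β β') ∧
    2 * finrank ℝ (span ℝ (S : Set (Fin d → ℝ))) ≤
      fiberRankSum ℝ Φ (fun θ => kerC θ ⊓ L) (span ℝ S) + 1

theorem exists_isCrossPair (hd : 0 < d) (hRS : IsRootSystem Φ) (hirr : IsIrreducibleRS Φ)
    (hL : 2 ≤ finrank ℂ L) (hLk : ∀ θ ∈ Φ, ¬ L ≤ kerC θ) :
    ∃ θ ∈ Φ, ∃ η ∈ Φ, IsCrossPair L θ η := by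
  obtain ⟨θ₀, hθ₀⟩ := hRS.nonempty hd
  obtain ⟨η₀, hη₀, hne⟩ := exists_kerC_inf_ne hRS.2.1 hL (hLk θ₀ hθ₀)
  obtain ⟨θ, hθ, hθfib, η, hη, hηfib, hθη⟩ :=
    hirr.exists_dotR_ne_zero (fun θ => kerC θ ⊓ L = kerC θ₀ ⊓ L) hθ₀ rfl hη₀ hne
  exact ⟨θ, hθ, η, hη, hθη, hθfib.trans_ne (Ne.symm hηfib)⟩

theorem exists_isAdmissible (hd : 0 < d) (hRS : IsRootSystem Φ) (hirr : IsIrreducibleRS Φ)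
    (hL : 2 ≤ finrank ℂ L) (hLk : ∀ θ ∈ Φ, ¬ L ≤ kerC θ) : ∃ S, IsAdmissible L Φ S := by
  obtain ⟨θ, hθ, η, hη, hθη⟩ := exists_isCrossPair hd hRS hirr hL hLk
  obtain ⟨n, hn, hγ⟩ := hRS.exists_sub_smul_mem hθ hη hθη.symm.1
  set S : Finset (Fin d → ℝ) := {θ, η}
  set X := span ℝ (S : Set (Fin d → ℝ))
  have hθS : θ ∈ S := Finset.mem_insert_self θ _
  have hηS : η ∈ S := Finset.mem_insert_of_mem (Finset.mem_singleton_self η)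
  have hθX : θ ∈ X := subset_span hθS
  have hηX : η ∈ X := subset_span hηS
  have hcount : fiberRankSum ℝ Φ (fun θ => kerC θ ⊓ L) ⊥ + 3 ≤
      fiberRankSum ℝ Φ (fun θ => kerC θ ⊓ L) X := by
    have hne₁ := kerC_sub_smul_inf_ne_left hn (hLk η hη) (hLk θ hθ) hθη.2.symm
    have hne₂ := kerC_sub_smul_inf_ne_right (n := n) (hLk η hη) (hLk θ hθ) hθη.2.symm
    have := fiberRankSum_add_card_le (c := fun θ => kerC θ ⊓ L) bot_le
        {kerC (η - n • θ) ⊓ L, kerC η ⊓ L, kerC θ ⊓ L} <| by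
      simp only [Finset.mem_insert, Finset.mem_singleton, forall_eq_or_imp, forall_eq,
        Submodule.mem_bot]
      exact ⟨⟨_, hγ, rfl, sub_mem hηX (smul_mem _ _ hθX), hRS.ne_zero hγ⟩,
        ⟨η, hη, rfl, hηX, hRS.ne_zero hη⟩, ⟨θ, hθ, rfl, hθX, hRS.ne_zero hθ⟩⟩
    rwa [Finset.card_eq_three.2 ⟨_, _, _, hne₁, hne₂, hθη.2.symm, rfl⟩] at this
  have hrank : finrank ℝ X ≤ 2 := (finrank_span_finset_le_card S).trans Finset.card_le_two
  refine ⟨S, Finset.insert_subset hθ (Finset.singleton_subset_iff.2 hη),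
    Finset.insert_nonempty _ _, ?_, ?_⟩
  · intro x hx
    rcases Finset.mem_insert.1 hx with rfl | hx
    · exact ⟨η, hηS, hθη⟩
    · exact ⟨θ, hθS, Finset.mem_singleton.1 hx ▸ hθη.symm⟩
  · change 2 * finrank ℝ X ≤ fiberRankSum ℝ Φ (fun θ => kerC θ ⊓ L) X + 1
    omega

theorem exists_isCrossPair_notMem_span (hRS : IsRootSystem Φ) (hirr : IsIrreducibleRS Φ)
    (hLk : ∀ θ ∈ Φ, ¬ L ≤ kerC θ) {S : Finset (Fin d → ℝ)} (hSΦ : S ⊆ Φ) (hS : S.Nonempty)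
    (hpartner : ∀ β ∈ S, ∃ β' ∈ S, IsCrossPair L β β') (htop : span ℝ (S : Set (Fin d → ℝ)) ≠ ⊤) :
    ∃ τ ∈ Φ, τ ∉ span ℝ (S : Set (Fin d → ℝ)) ∧ ∃ β ∈ S, IsCrossPair L τ β := by
  set X := span ℝ (S : Set (Fin d → ℝ))
  obtain ⟨s, hs⟩ := hS
  obtain ⟨b₀, hb₀, hb₀X⟩ : ∃ b ∈ Φ, b ∉ X := by
    by_contra! h
    exact htop (eq_top_iff.2 (hRS.2.1 ▸ span_le.2 h))
  obtain ⟨a, -, haX, b, hb, hbX, hab⟩ :=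
    hirr.exists_dotR_ne_zero (· ∈ X) (hSΦ hs) (subset_span hs) hb₀ hb₀X
  obtain ⟨β, hβ, hβb⟩ := exists_mem_dotR_ne_zero_of_mem_span haX hab
  rw [dotR_comm] at hβb
  by_cases hfib : kerC b ⊓ L = kerC β ⊓ L
  swap
  · exact ⟨b, hb, hbX, β, hβ, hβb, hfib⟩
  obtain ⟨β', hβ', hββ'⟩ := hpartner β hβ
  by_cases hbβ' : dotR b β' ≠ 0
  · exact ⟨b, hb, hbX, β', hβ', hbβ', hfib.trans_ne hββ'.2⟩
  push Not at hbβ'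
  obtain ⟨n, hn, hρ⟩ := hRS.exists_sub_smul_mem (hSΦ hβ) hb hβb
  refine ⟨b - n • β, hρ, fun h => hbX ((X.sub_mem_iff_left (X.smul_mem n (subset_span hβ))).1 h),
    β', hβ', ?_, ?_⟩
  · rw [dotR_sub_smul, hbβ', zero_sub, neg_ne_zero]
    exact mul_ne_zero hn hββ'.1
  · exact (kerC_sub_smul_inf_eq (hLk b hb) (hLk _ hρ) hfib).trans_ne (hfib.trans_ne hββ'.2)

theorem IsAdmissible.exists_finrank_lt (hRS : IsRootSystem Φ) (hirr : IsIrreducibleRS Φ)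
    (hLk : ∀ θ ∈ Φ, ¬ L ≤ kerC θ) {S : Finset (Fin d → ℝ)} (hS : IsAdmissible L Φ S)
    (htop : span ℝ (S : Set (Fin d → ℝ)) ≠ ⊤) :
    ∃ S', IsAdmissible L Φ S' ∧
      finrank ℝ (span ℝ (S : Set (Fin d → ℝ))) < finrank ℝ (span ℝ (S' : Set (Fin d → ℝ))) := by
  obtain ⟨hSΦ, hSne, hpartner, hcount⟩ := hS
  obtain ⟨τ, hτ, hτX, β, hβ, hτβ⟩ :=
    exists_isCrossPair_notMem_span hRS hirr hLk hSΦ hSne hpartner htop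
  obtain ⟨n, hn, hγ⟩ := hRS.exists_sub_smul_mem (hSΦ hβ) hτ hτβ.1
  set X := span ℝ (S : Set (Fin d → ℝ))
  have hle : finrank ℝ (span ℝ ((insert τ S : Finset _) : Set (Fin d → ℝ))) ≤ finrank ℝ X + 1 := by
    rw [Finset.coe_insert, span_insert, add_comm]
    exact (finrank_add_le_finrank_add_finrank _ _).trans
      (Nat.add_le_add_right (finrank_span_le_card {τ} |>.trans (by simp)) _)
  set Y := span ℝ ((insert τ S : Finset _) : Set (Fin d → ℝ))
  have hXY : X ≤ Y := span_mono (by simp)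
  have hτY : τ ∈ Y := subset_span (by simp)
  have hβX : β ∈ X := subset_span hβ
  have hγX : τ - n • β ∉ X := fun h => hτX ((X.sub_mem_iff_left (X.smul_mem n hβX)).1 h)
  have hlt : finrank ℝ X < finrank ℝ Y :=
    finrank_lt_finrank_of_lt (lt_of_le_of_ne hXY fun h => hτX (h ▸ hτY))
  have hsum : fiberRankSum ℝ Φ (fun θ => kerC θ ⊓ L) X + 2 ≤
      fiberRankSum ℝ Φ (fun θ => kerC θ ⊓ L) Y := by
    have := fiberRankSum_add_card_le (c := fun θ => kerC θ ⊓ L) hXY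
        {kerC (τ - n • β) ⊓ L, kerC τ ⊓ L} <| by
      simp only [Finset.mem_insert, Finset.mem_singleton, forall_eq_or_imp, forall_eq]
      exact ⟨⟨_, hγ, rfl, sub_mem hτY (smul_mem _ _ (hXY hβX)), hγX⟩, ⟨τ, hτ, rfl, hτY, hτX⟩⟩
    rwa [Finset.card_pair (kerC_sub_smul_inf_ne_left hn (hLk τ hτ) (hLk β (hSΦ hβ)) hτβ.2)]
      at this
  refine ⟨insert τ S, ⟨Finset.insert_subset hτ hSΦ, Finset.insert_nonempty _ _, ?_, ?_⟩, hlt⟩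
  · intro x hx
    rcases Finset.mem_insert.1 hx with rfl | hx
    · exact ⟨β, Finset.mem_insert_of_mem hβ, hτβ⟩
    · obtain ⟨y, hy, hxy⟩ := hpartner x hx
      exact ⟨y, Finset.mem_insert_of_mem hy, hxy⟩
  · change 2 * finrank ℝ Y ≤ fiberRankSum ℝ Φ (fun θ => kerC θ ⊓ L) Y + 1
    omega

theorem le_sum_finrank_span_fiber (hd : 0 < d) (hRS : IsRootSystem Φ)
    (hirr : IsIrreducibleRS Φ) (hL : 2 ≤ finrank ℂ L) (hLk : ∀ θ ∈ Φ, ¬ L ≤ kerC θ) :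
    2 * d - 1 ≤ ∑ l ∈ Φ.image (fun θ => kerC θ ⊓ L),
        finrank ℝ ↥(span ℝ {θ : Fin d → ℝ | θ ∈ Φ ∧ kerC θ ⊓ L = l}) := by
  set adm := Φ.powerset.filter (IsAdmissible L Φ)
  have hmem : ∀ {S}, IsAdmissible L Φ S → S ∈ adm := fun hS =>
    Finset.mem_filter.2 ⟨Finset.mem_powerset.2 hS.1, hS⟩
  obtain ⟨S, hS, hmax⟩ := adm.exists_max_image (fun S => finrank ℝ (span ℝ (S : Set (Fin d → ℝ))))
    (let ⟨_, hS⟩ := exists_isAdmissible hd hRS hirr hL hLk; ⟨_, hmem hS⟩)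
  have hS := (Finset.mem_filter.1 hS).2
  have htop : span ℝ (S : Set (Fin d → ℝ)) = ⊤ := by
    by_contra htop
    obtain ⟨S', hS', hlt⟩ := hS.exists_finrank_lt hRS hirr hLk htop
    exact (hmax S' (hmem hS')).not_gt hlt
  have hcount := hS.2.2.2
  rw [htop, finrank_top, finrank_fin_fun, fiberRankSum_top] at hcount
  omega

end LowerBound

open Classical in
theorem stmt14_general {d : ℕ} (hd : 2 ≤ d) (Φ : Finset (Fin d → ℝ))
    (hRS : IsRootSystem Φ) (hirr : IsIrreducibleRS Φ)
    (L : Submodule ℂ (Fin d → ℂ)) (hL : Module.finrank ℂ L = 2)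
    (hLk : ∀ θ ∈ Φ, ¬ L ≤ kerC θ) :
    2 * d - 1 ≤ ∑ l ∈ Φ.image (fun θ => kerC θ ⊓ L),
        Module.finrank ℝ
          ↥(Submodule.span ℝ {θ : Fin d → ℝ | θ ∈ Φ ∧ kerC θ ⊓ L = l}) ∧
    2 * (∑ l ∈ Φ.image (fun θ => kerC θ ⊓ L),
        Module.finrank ℝ
          ↥(Submodule.span ℝ {θ : Fin d → ℝ | θ ∈ Φ ∧ kerC θ ⊓ L = l})) ≤ Φ.card :=
  ⟨le_sum_finrank_span_fiber (by omega) hRS hirr hL.ge hLk,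
    two_mul_sum_finrank_span_fiber_le_card Φ _ (fun h => hRS.ne_zero h rfl)
      (fun _ => hRS.neg_mem) fun θ _ => congrArg (· ⊓ L) (kerC_neg θ)⟩

open Classical in
/-- For a simply-laced (ADE) irreducible root system `Φ` of rank `d ≥ 2`
and the `L`-induced decomposition `Φ = Φ_1 ⊔ ⋯ ⊔ Φ_s`, with `r_k = dim_ℝ span_ℝ Φ_k`, one
has `2d − 1 ≤ Σ r_k ≤ (1/2)·#Φ`. -/
theorem stmt14 {d : ℕ} (hd : 2 ≤ d) (Φ : Finset (Fin d → ℝ))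
    (hRS : IsRootSystem Φ) (hred : IsReducedRS Φ) (hirr : IsIrreducibleRS Φ)
    (hADE : ∀ α ∈ Φ, ∀ β ∈ Φ, dotR α α = dotR β β)
    (L : Submodule ℂ (Fin d → ℂ)) (hL : Module.finrank ℂ L = 2)
    (hLk : ∀ θ ∈ Φ, ¬ L ≤ kerC θ) :
    2 * d - 1 ≤ ∑ l ∈ Φ.image (fun θ => kerC θ ⊓ L),
        Module.finrank ℝ
          ↥(Submodule.span ℝ {θ : Fin d → ℝ | θ ∈ Φ ∧ kerC θ ⊓ L = l}) ∧
    2 * (∑ l ∈ Φ.image (fun θ => kerC θ ⊓ L),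
        Module.finrank ℝ
          ↥(Submodule.span ℝ {θ : Fin d → ℝ | θ ∈ Φ ∧ kerC θ ⊓ L = l})) ≤ Φ.card :=
  stmt14_general hd Φ hRS hirr L hL hLk

end
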